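/- arXiv:0907.2935 — 3 statements merged into one kernel-verified Lean document; each statement's English description precedes it below -/
import Mathlib

section
/- In the digraph (V,→) of the positively expansive example (vertices indexed by ℕ, with edges: n+1 → n for circle vertices' copying, and m_{k+1} → m_k as well as m_k+1 → m_k for square vertices, where m_k = k(k+1)), every vertex v has connectivity dimension exactly 2: lim_{r→∞} log|B(v,r)|/log(r) = 2. In particular, for vertex □_0, the ball cardinality |B(□_0,r)| grows quadratically in r (bounded below and above by positive multiples of r²). -/
open Filter Topology

/-- The ball of radius `r` around `v` in the digraph `E`. -/
def gBall {V : Type*} (E : V → V → Prop) (v : V) : ℕ → Set V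
  | 0 => {v}
  | r + 1 => gBall E v r ∪ {u | ∃ w ∈ gBall E v r, E u w}

/-- For `n = k(k+1)`, recovers `k`. -/
def kOf (n : ℕ) : ℕ := (Nat.sqrt (4 * n + 1) - 1) / 2

/-- The digraph of the positively expansive example: each square vertex `m_k = k(k+1)`
receives edges from `m_k + 1` and from the next square `m_{k+1}`; every circle vertex `n`
receives an edge from `n + 1`. -/
def exE (u w : ℕ) : Prop :=
  if kOf w * (kOf w + 1) = w then u = w + 1 ∨ u = (kOf w + 1) * (kOf w + 2)
  else u = w + 1

/-!
The ball `B(v, r)` lies in the interval `[v, m_{v+r}]`, because a single edge raises the index of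
the last square below a vertex by at most one; this gives `|B(v, r)| ≤ (v + r + 1)²`. Conversely,
`v` reaches the square `m_{v+i}` in `v² + i` steps and `m_{v+i} + s` in `s` more; for `s ≤ i`
these vertices are pairwise distinct, which gives `|B(v, r)| ≥ c r²` for large `r`. Two-sided quadratic
bounds make `log |B(v, r)| / log r` tend to `2`.
-/

theorem tendsto_log_div_log_of_pow_bounds {f : ℕ → ℝ} {c C : ℝ} {d : ℕ} (hc : 0 < c)
    (hf : ∀ᶠ r : ℕ in atTop, c * (r : ℝ) ^ d ≤ f r ∧ f r ≤ C * (r : ℝ) ^ d) :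
    Tendsto (fun r : ℕ => Real.log (f r) / Real.log r) atTop (𝓝 d) := by
  have hlog : Tendsto (fun r : ℕ => Real.log r) atTop atTop :=
    Real.tendsto_log_atTop.comp tendsto_natCast_atTop_atTop
  have hlim (a : ℝ) : Tendsto (fun r : ℕ => d + a / Real.log r) atTop (𝓝 d) := by
    simpa using tendsto_const_nhds.add (tendsto_const_nhds.div_atTop hlog)
  have hsqueeze : ∀ᶠ r : ℕ in atTop,
      d + Real.log c / Real.log r ≤ Real.log (f r) / Real.log r ∧
      Real.log (f r) / Real.log r ≤ d + Real.log C / Real.log r := by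
    filter_upwards [hf, eventually_ge_atTop 2] with r ⟨hlo, hhi⟩ hr
    have hL : 0 < Real.log r := Real.log_pos (by exact_mod_cast hr)
    have hlog_pow {a : ℝ} (ha : 0 < a) :
        Real.log (a * r ^ d) / Real.log r = d + Real.log a / Real.log r := by
      rw [Real.log_mul ha.ne' (by positivity), Real.log_pow]
      field_simp
      ring
    have hcr : 0 < c * (r : ℝ) ^ d := by positivity
    have hC : 0 < C := pos_of_mul_pos_left (hcr.trans_le (hlo.trans hhi)) (by positivity)
    rw [← hlog_pow hc, ← hlog_pow hC]
    exact ⟨div_le_div_of_nonneg_right (Real.log_le_log hcr hlo) hL.le,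
      div_le_div_of_nonneg_right (Real.log_le_log (hcr.trans_le hlo) hhi) hL.le⟩
  exact tendsto_of_tendsto_of_tendsto_of_le_of_le' (hlim _) (hlim _)
    (hsqueeze.mono fun _ h => h.1) (hsqueeze.mono fun _ h => h.2)

section gBall

variable {V : Type*} {E : V → V → Prop} {v : V}

theorem mem_gBall_self (r : ℕ) : v ∈ gBall E v r := by
  induction r with
  | zero => rfl
  | succ r ih => exact Or.inl ih

theorem mem_gBall_succ_of_adj {u w : V} {r : ℕ} (hw : w ∈ gBall E v r) (he : E u w) :
    u ∈ gBall E v (r + 1) :=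
  Or.inr ⟨w, hw, he⟩

theorem gBall_mono : Monotone (gBall E v) :=
  monotone_nat_of_le_succ fun _ _ hx => Or.inl hx

end gBall

theorem kOf_mul_succ_add {k s : ℕ} (hs : s ≤ k) : kOf (k * (k + 1) + s) = k := by
  have hsqrt : Nat.sqrt (4 * (k * (k + 1) + s) + 1) = 2 * k + 1 := by
    rw [show 4 * (k * (k + 1) + s) + 1 = (2 * k + 1) * (2 * k + 1) + 4 * s by ring]
    exact Nat.sqrt_add_eq _ (by omega)
  rw [kOf, hsqrt]
  omega

theorem exE_succ (w : ℕ) : exE (w + 1) w := by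
  unfold exE
  split
  · exact Or.inl rfl
  · rfl

theorem exE_next_square (k : ℕ) : exE ((k + 1) * (k + 2)) (k * (k + 1)) := by
  have hk : kOf (k * (k + 1)) = k := by simpa using kOf_mul_succ_add (k := k) (s := 0) (by omega)
  simp [exE, hk]

theorem exE_bounds {u w n : ℕ} (he : exE u w) (hw : w ≤ n * (n + 1)) :
    w ≤ u ∧ u ≤ (n + 1) * (n + 2) := by
  unfold exE at he
  split at he
  case isTrue =>
    rcases he with rfl | rfl
    · constructor <;> nlinarith
    · have hk : kOf w ≤ n := by nlinarith
      constructor <;> nlinarith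
  case isFalse =>
    subst he
    constructor <;> nlinarith

theorem add_mem_gBall_exE {v w r : ℕ} (hw : w ∈ gBall exE v r) (d : ℕ) :
    w + d ∈ gBall exE v (r + d) := by
  induction d with
  | zero => exact hw
  | succ d ih => exact mem_gBall_succ_of_adj ih (exE_succ _)

theorem mem_gBall_exE (v i s : ℕ) :
    (v + i) * (v + i + 1) + s ∈ gBall exE v (v * v + i + s) := by
  refine add_mem_gBall_exE ?_ s
  induction i with
  | zero =>
    simpa [mul_add, add_comm] using add_mem_gBall_exE (mem_gBall_self (E := exE) (v := v) 0) (v * v)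
  | succ i ih => simpa [add_assoc] using mem_gBall_succ_of_adj ih (exE_next_square (v + i))

theorem gBall_exE_subset_Icc (v r : ℕ) : gBall exE v r ⊆ Set.Icc v ((v + r) * (v + r + 1)) := by
  induction r with
  | zero =>
    rintro x rfl
    exact ⟨le_rfl, by nlinarith⟩
  | succ r ih =>
    rintro x (hx | ⟨w, hw, he⟩)
    · obtain ⟨h₁, h₂⟩ := ih hx
      exact ⟨h₁, by nlinarith⟩
    · obtain ⟨h₁, h₂⟩ := ih hw
      obtain ⟨hwx, hx⟩ := exE_bounds he h₂
      exact ⟨h₁.trans hwx, by simpa [add_assoc] using hx⟩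

theorem gBall_exE_finite (v r : ℕ) : (gBall exE v r).Finite :=
  (Set.finite_Icc _ _).subset (gBall_exE_subset_Icc v r)

theorem ncard_gBall_exE_le (v r : ℕ) : (gBall exE v r).ncard ≤ (v + r + 1) ^ 2 := by
  calc (gBall exE v r).ncard ≤ (Set.Icc v ((v + r) * (v + r + 1))).ncard :=
        Set.ncard_le_ncard (gBall_exE_subset_Icc v r) (Set.finite_Icc _ _)
    _ = (v + r) * (v + r + 1) + 1 - v := by simp [← Finset.coe_Icc, Set.ncard_coe_finset]
    _ ≤ (v + r + 1) ^ 2 := by nlinarith [Nat.sub_le ((v + r) * (v + r + 1) + 1) v]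

theorem sq_div_three_le_ncard_gBall_exE (v r : ℕ) :
    ((r - v * v) / 3) ^ 2 ≤ (gBall exE v r).ncard := by
  set h := (r - v * v) / 3
  let pairs : Finset (ℕ × ℕ) := Finset.Ico h (2 * h) ×ˢ Finset.range h
  have hmaps : ∀ p ∈ (pairs : Set (ℕ × ℕ)),
      (v + p.1) * (v + p.1 + 1) + p.2 ∈ gBall exE v r := by
    rintro ⟨i, s⟩ hp
    simp only [pairs, Finset.coe_product, Set.mem_prod, Finset.coe_Ico, Set.mem_Ico,
      Finset.coe_range, Set.mem_Iio] at hp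
    exact gBall_mono (by omega) (mem_gBall_exE v i s)
  -- `s < h ≤ i` keeps `m_{v+i} + s` below the next square, so `kOf` recovers `v + i`.
  have hinj : Set.InjOn (fun p : ℕ × ℕ => (v + p.1) * (v + p.1 + 1) + p.2) pairs := by
    rintro ⟨i, s⟩ hp ⟨j, t⟩ hq heq
    simp only [pairs, Finset.coe_product, Set.mem_prod, Finset.coe_Ico, Set.mem_Ico,
      Finset.coe_range, Set.mem_Iio] at hp hq heq
    have hij : v + i = v + j := by
      rw [← kOf_mul_succ_add (k := v + i) (s := s) (by omega), heq,
        kOf_mul_succ_add (by omega)]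
    have hij' : i = j := by omega
    subst hij'
    simp only [Prod.mk.injEq, true_and]
    omega
  calc h ^ 2 = (pairs : Set (ℕ × ℕ)).ncard := by
        rw [Set.ncard_coe_finset, Finset.card_product, Nat.card_Ico, Finset.card_range,
          show 2 * h - h = h by omega, sq]
    _ ≤ (gBall exE v r).ncard :=
        Set.ncard_le_ncard_of_injOn _ hmaps hinj (gBall_exE_finite v r)

theorem exE_quadratic_growth (v : ℕ) : ∃ c C : ℝ, 0 < c ∧ 0 < C ∧ ∀ᶠ r : ℕ in atTop,
    c * (r : ℝ) ^ 2 ≤ ((gBall exE v r).ncard : ℝ) ∧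
    ((gBall exE v r).ncard : ℝ) ≤ C * (r : ℝ) ^ 2 := by
  refine ⟨1 / 36, ((v : ℝ) + 2) ^ 2, by norm_num, by positivity, ?_⟩
  filter_upwards [eventually_ge_atTop (2 * (v * v) + 8)] with r hr
  have hlower : r ^ 2 ≤ 36 * (gBall exE v r).ncard := by
    have hr6 : r ≤ 6 * ((r - v * v) / 3) := by
      generalize v * v = q at *
      omega
    nlinarith [sq_div_three_le_ncard_gBall_exE v r]
  have hupper : (gBall exE v r).ncard ≤ ((v + 2) * r) ^ 2 :=
    (ncard_gBall_exE_le v r).trans (Nat.pow_le_pow_left (by nlinarith [(by omega : 1 ≤ r)]) 2)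
  constructor
  · have : (r : ℝ) ^ 2 ≤ 36 * ((gBall exE v r).ncard : ℝ) := by exact_mod_cast hlower
    linarith
  · have : ((gBall exE v r).ncard : ℝ) ≤ (((v : ℝ) + 2) * r) ^ 2 := by exact_mod_cast hupper
    linarith [mul_pow ((v : ℝ) + 2) (r : ℝ) 2]

/-- Every vertex of the example digraph has connectivity dimension `2`; moreover the
ball cardinalities at vertex `□_0 = 0` grow quadratically. -/
theorem example_dimension_two :
    (∀ v : ℕ, Filter.Tendsto
        (fun r : ℕ => Real.log ((gBall exE v r).ncard) / Real.log r)
        Filter.atTop (nhds 2)) ∧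
    ∃ c C : ℝ, 0 < c ∧ 0 < C ∧ ∀ᶠ r : ℕ in Filter.atTop,
      c * (r : ℝ) ^ 2 ≤ ((gBall exE 0 r).ncard : ℝ) ∧
      ((gBall exE 0 r).ncard : ℝ) ≤ C * (r : ℝ) ^ 2 := by
  refine ⟨fun v => ?_, exE_quadratic_growth 0⟩
  obtain ⟨c, C, hc, -, hbounds⟩ := exE_quadratic_growth v
  simpa using tendsto_log_div_log_of_pow_bounds (d := 2) hc hbounds
end

section
/- If (X,d) and (X',d') are compact metric spaces and Γ : X → X' is a biHölder homeomorphism (both Γ and Γ⁻¹ are Hölder continuous), and both double-logarithmic dimensions dim(X,d) and dim(X',d') exist, then dim(X,d) = dim(X',d'). -/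
open Filter Topology
attribute [local instance] Classical.propDecidable

noncomputable def coverNum (X : Type*) [MetricSpace X] (ε : ℝ) : ℕ :=
  sInf {n : ℕ | ∃ C : Finset (Set X), C.card = n ∧
    (∀ S ∈ C, IsOpen S ∧ Metric.diam S ≤ ε) ∧ ⋃₀ (C : Set (Set X)) = Set.univ}

lemma coverSet_nonempty (X : Type*) [MetricSpace X] [CompactSpace X] {ε : ℝ} (hε : 0 < ε) :
    {n : ℕ | ∃ C : Finset (Set X), C.card = n ∧
      (∀ S ∈ C, IsOpen S ∧ Metric.diam S ≤ ε) ∧ ⋃₀ (C : Set (Set X)) = Set.univ}.Nonempty := by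
  obtain ⟨t, ht⟩ := IsCompact.elim_finite_subcover isCompact_univ
    (fun x : X => Metric.ball x (ε/3)) (fun x => Metric.isOpen_ball)
    (fun x _ => Set.mem_iUnion.mpr ⟨x, Metric.mem_ball_self (by linarith)⟩)
  refine ⟨(t.image (fun x => Metric.ball x (ε/3))).card, t.image _, rfl, ?_, ?_⟩
  · intro S hS
    obtain ⟨x, -, rfl⟩ := Finset.mem_image.mp hS
    exact ⟨Metric.isOpen_ball, le_trans (Metric.diam_ball (by linarith)) (by linarith)⟩
  · apply Set.eq_univ_of_forall
    intro y
    obtain ⟨_, ⟨x, rfl⟩, hy2⟩ := ht (Set.mem_univ y)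
    simp only [Set.mem_iUnion, exists_prop] at hy2
    exact ⟨Metric.ball x (ε/3), by simpa using ⟨x, hy2.1, rfl⟩, hy2.2⟩

lemma coverNum_mem (X : Type*) [MetricSpace X] [CompactSpace X] {ε : ℝ} (hε : 0 < ε) :
    ∃ C : Finset (Set X), C.card = coverNum X ε ∧
      (∀ S ∈ C, IsOpen S ∧ Metric.diam S ≤ ε) ∧ ⋃₀ (C : Set (Set X)) = Set.univ :=
  Nat.sInf_mem (coverSet_nonempty X hε)

lemma coverNum_le_one (X : Type*) [MetricSpace X] [Subsingleton X] {ε : ℝ} (hε : 0 < ε) :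
    coverNum X ε ≤ 1 := by
  apply Nat.sInf_le
  refine ⟨{Set.univ}, by simp, ?_, by simp⟩
  intro S hS
  simp only [Finset.mem_singleton] at hS
  subst hS
  exact ⟨isOpen_univ, le_trans (le_of_eq (Metric.diam_subsingleton Set.subsingleton_univ)) hε.le⟩

lemma two_le_coverNum (X : Type*) [MetricSpace X] [CompactSpace X] {a b : X} (hab : a ≠ b)
    {δ : ℝ} (hδ : 0 < δ) (hlt : δ < dist a b) : 2 ≤ coverNum X δ := by
  obtain ⟨C, hcard, hC, hU⟩ := coverNum_mem X hδ
  rw [← hcard]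
  have ha : a ∈ ⋃₀ (C : Set (Set X)) := hU ▸ Set.mem_univ a
  have hb : b ∈ ⋃₀ (C : Set (Set X)) := hU ▸ Set.mem_univ b
  obtain ⟨S, hS, haS⟩ := ha
  obtain ⟨T, hT, hbT⟩ := hb
  have hST : S ≠ T := by
    rintro rfl
    have hbd : Bornology.IsBounded S :=
      (isCompact_univ.isBounded).subset (Set.subset_univ S)
    have := le_trans (Metric.dist_le_diam_of_mem hbd haS hbT) (hC S hS).2
    linarith
  exact Finset.one_lt_card.mpr ⟨S, hS, T, hT, hST⟩

lemma coverNum_anti (X : Type*) [MetricSpace X] [CompactSpace X] {ε₁ ε₂ : ℝ} (h1 : 0 < ε₁)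
    (h : ε₁ ≤ ε₂) : coverNum X ε₂ ≤ coverNum X ε₁ := by
  obtain ⟨C, hcard, hC, hU⟩ := coverNum_mem X h1
  rw [← hcard]
  exact Nat.sInf_le ⟨C, rfl, fun S hS => ⟨(hC S hS).1, (hC S hS).2.trans h⟩, hU⟩

lemma coverNum_transfer {X X' : Type*} [MetricSpace X] [MetricSpace X']
    [CompactSpace X] [CompactSpace X'] (Γ : X ≃ₜ X')
    {η lam : ℝ} (hη : 0 < η) (hlam : 0 < lam)
    (hH : ∀ x₁ x₂ : X, dist (Γ x₁) (Γ x₂) ≤ lam * dist x₁ x₂ ^ η)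
    {ε : ℝ} (hε : 0 < ε) : coverNum X' (lam * ε ^ η) ≤ coverNum X ε := by
  obtain ⟨C, hcard, hC, hU⟩ := coverNum_mem X hε
  have hpos : (0:ℝ) ≤ lam * ε ^ η := by positivity
  have hmem : (C.image (fun S => Γ '' S)).card ∈ {n : ℕ | ∃ C : Finset (Set X'), C.card = n ∧
      (∀ S ∈ C, IsOpen S ∧ Metric.diam S ≤ lam * ε ^ η) ∧ ⋃₀ (C : Set (Set X')) = Set.univ} := by
    refine ⟨C.image (fun S => Γ '' S), rfl, ?_, ?_⟩
    · intro T hT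
      obtain ⟨S, hS, rfl⟩ := Finset.mem_image.mp hT
      refine ⟨Γ.isOpenMap S (hC S hS).1, ?_⟩
      apply Metric.diam_le_of_forall_dist_le hpos
      rintro y ⟨x₁, hx₁, rfl⟩ z ⟨x₂, hx₂, rfl⟩
      have hbd : Bornology.IsBounded S := (isCompact_univ.isBounded).subset (Set.subset_univ S)
      have h1 : dist x₁ x₂ ≤ ε := (Metric.dist_le_diam_of_mem hbd hx₁ hx₂).trans (hC S hS).2
      calc dist (Γ x₁) (Γ x₂) ≤ lam * dist x₁ x₂ ^ η := hH x₁ x₂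
        _ ≤ lam * ε ^ η :=
          mul_le_mul_of_nonneg_left (Real.rpow_le_rpow dist_nonneg h1 hη.le) hlam.le
    · apply Set.eq_univ_of_forall
      intro y
      have : Γ.symm y ∈ ⋃₀ (C : Set (Set X)) := hU ▸ Set.mem_univ _
      obtain ⟨S, hS, hyS⟩ := this
      refine ⟨Γ '' S, by simpa using ⟨S, hS, rfl⟩, ⟨Γ.symm y, hyS, Γ.apply_symm_apply y⟩⟩
  calc coverNum X' (lam * ε ^ η) ≤ (C.image (fun S => Γ '' S)).card := Nat.sInf_le hmem
    _ ≤ C.card := Finset.card_image_le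
    _ = coverNum X ε := hcard

lemma loglog_mono {n m : ℕ} (h2 : 2 ≤ n) (h : n ≤ m) :
    Real.log (Real.log n) ≤ Real.log (Real.log m) := by
  have h1 : (1:ℝ) < n := by exact_mod_cast h2.trans_lt' one_lt_two
  have hlogn : 0 < Real.log n := Real.log_pos h1
  exact Real.log_le_log hlogn (Real.log_le_log (by linarith) (by exact_mod_cast h))


lemma ratio_tendsto (η c : ℝ) (hη : 0 < η) :
    Tendsto (fun t : ℝ => Real.log t / Real.log (η * t - c)) atTop (𝓝 1) := by
  have hL : Tendsto (fun t : ℝ => Real.log (η - c / t)) atTop (𝓝 (Real.log η)) := by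
    have h1 : Tendsto (fun t : ℝ => η - c / t) atTop (𝓝 η) := by
      have h0 : Tendsto (fun t : ℝ => c / t) atTop (𝓝 0) :=
        Tendsto.div_atTop (tendsto_const_nhds (x := c)) tendsto_id
      have := (tendsto_const_nhds (x := η)).sub h0
      simpa using this
    exact ((Real.continuousAt_log hη.ne').tendsto.comp h1)
  have hsmall : Tendsto (fun t : ℝ => Real.log (η - c / t) / Real.log t) atTop (𝓝 0) :=
    hL.div_atTop Real.tendsto_log_atTop
  have hmain : Tendsto (fun t : ℝ => 1 / (1 + Real.log (η - c / t) / Real.log t)) atTop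
      (𝓝 1) := by
    have : Tendsto (fun t : ℝ => 1 + Real.log (η - c / t) / Real.log t) atTop (𝓝 1) := by
      simpa using tendsto_const_nhds.add hsmall
    have h := (tendsto_const_nhds (x := (1:ℝ))).div this one_ne_zero
    simp only [div_self (one_ne_zero (α := ℝ))] at h
    exact h
  apply hmain.congr'
  have hev : ∀ᶠ t : ℝ in atTop, max 1 (2 * |c| / η) < t := eventually_gt_atTop _
  filter_upwards [hev] with t ht
  have ht1 : 1 < t := lt_of_le_of_lt (le_max_left _ _) ht
  have ht0 : 0 < t := by linarith
  have hc : |c| / t < η / 2 := by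
    rw [div_lt_iff₀ ht0]
    have : 2 * |c| / η < t := lt_of_le_of_lt (le_max_right _ _) ht
    rw [div_lt_iff₀ hη] at this
    linarith
  have hfac : 0 < η - c / t := by
    have : c / t ≤ |c| / t := div_le_div_of_nonneg_right (le_abs_self c) ht0.le
    linarith
  have hlogt : 0 < Real.log t := Real.log_pos ht1
  have hsplit : Real.log (η * t - c) = Real.log t + Real.log (η - c / t) := by
    have : η * t - c = t * (η - c / t) := by field_simp
    rw [this, Real.log_mul ht0.ne' hfac.ne']
  rw [hsplit]
  have h2 : 1 + Real.log (η - c / t) / Real.log t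
      = (Real.log t + Real.log (η - c / t)) / Real.log t := by
    field_simp
  rw [h2, one_div_div]


lemma tendsto_zero_of_subsingleton (Y : Type*) [MetricSpace Y] (hY : Subsingleton Y) :
    Tendsto (fun ε : ℝ => Real.log (Real.log (coverNum Y ε)) / Real.log (-Real.log ε))
      (nhdsWithin 0 (Set.Ioi 0)) (𝓝 0) := by
  apply Tendsto.congr' _ tendsto_const_nhds
  filter_upwards [self_mem_nhdsWithin] with ε (hε : ε ∈ Set.Ioi 0)
  have h1 : coverNum Y ε ≤ 1 := @coverNum_le_one Y _ hY ε hε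
  interval_cases h : coverNum Y ε <;> simp [h]

lemma dim_le_of_holder {X X' : Type*} [MetricSpace X] [MetricSpace X']
    [CompactSpace X] [CompactSpace X']
    (Γ : X ≃ₜ X')
    (η lam : ℝ) (hη : 0 < η) (hlam : 0 < lam)
    (hH : ∀ x₁ x₂ : X, dist (Γ x₁) (Γ x₂) ≤ lam * dist x₁ x₂ ^ η)
    (D D' : ℝ)
    (hD : Filter.Tendsto
      (fun ε : ℝ => Real.log (Real.log (coverNum X ε)) / Real.log (-Real.log ε))
      (nhdsWithin 0 (Set.Ioi 0)) (nhds D))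
    (hD' : Filter.Tendsto
      (fun ε : ℝ => Real.log (Real.log (coverNum X' ε)) / Real.log (-Real.log ε))
      (nhdsWithin 0 (Set.Ioi 0)) (nhds D')) :
    D' ≤ D := by
  set l : Filter ℝ := nhdsWithin 0 (Set.Ioi 0) with hl
  by_cases hsub : Subsingleton X'
  · -- both spaces are subsingletons; both limits are 0
    haveI := hsub
    have hsubX : Subsingleton X := Γ.toEquiv.subsingleton
    have h1 := tendsto_nhds_unique hD (tendsto_zero_of_subsingleton X hsubX)
    have h2 := tendsto_nhds_unique hD' (tendsto_zero_of_subsingleton X' hsub)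
    rw [h1, h2]
  · -- there are two distinct points in X'
    rw [not_subsingleton_iff_nontrivial] at hsub
    obtain ⟨a, b, hab⟩ := hsub
    have hd : 0 < dist a b := dist_pos.mpr hab
    set g : ℝ → ℝ := fun ε => lam * ε ^ η with hgdef
    have hgpos : ∀ ε : ℝ, 0 < ε → 0 < g ε := fun ε hε => by positivity
    have hg0 : Tendsto g l (𝓝 0) := by
      have hrpow : Tendsto (fun ε : ℝ => ε ^ η) l (𝓝 0) := by
        have hc := (Real.continuousAt_rpow_const 0 η (Or.inr hη.le)).tendsto
        rw [Real.zero_rpow hη.ne'] at hc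
        exact hc.mono_left nhdsWithin_le_nhds
      simpa using hrpow.const_mul lam
    have hg : Tendsto g l l := by
      rw [hl, tendsto_nhdsWithin_iff]
      exact ⟨hg0, eventually_mem_nhdsWithin.mono (fun ε hε => hgpos ε hε)⟩
    have hcomp : Tendsto
        (fun ε : ℝ => Real.log (Real.log (coverNum X' (g ε))) / Real.log (-Real.log (g ε)))
        l (𝓝 D') := hD'.comp hg
    have ht : Tendsto (fun ε : ℝ => -Real.log ε) l atTop :=
      tendsto_neg_atBot_atTop.comp Real.tendsto_log_nhdsGT_zero
    -- -log (g ε) = η * (-log ε) - log lam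
    have hBlog : ∀ ε : ℝ, 0 < ε → -Real.log (g ε) = η * (-Real.log ε) - Real.log lam := by
      intro ε hε
      rw [hgdef]
      simp only
      rw [Real.log_mul hlam.ne' (Real.rpow_pos_of_pos hε η).ne', Real.log_rpow hε]
      ring
    have hBB' : Tendsto (fun ε : ℝ => Real.log (-Real.log ε) / Real.log (-Real.log (g ε)))
        l (𝓝 1) := by
      have := (ratio_tendsto η (Real.log lam) hη).comp ht
      apply this.congr'
      filter_upwards [self_mem_nhdsWithin] with ε (hε : ε ∈ Set.Ioi 0)
      simp only [Function.comp_apply]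
      rw [hBlog ε hε]
    have hmul : Tendsto (fun ε : ℝ =>
        (Real.log (Real.log (coverNum X ε)) / Real.log (-Real.log ε)) *
        (Real.log (-Real.log ε) / Real.log (-Real.log (g ε)))) l (𝓝 D) := by
      have := hD.mul hBB'
      rwa [mul_one] at this
    refine le_of_tendsto_of_tendsto hcomp hmul ?_
    have htg : Tendsto (fun ε : ℝ => -Real.log (g ε)) l atTop := by
      have h1 : Tendsto (fun ε : ℝ => η * (-Real.log ε) - Real.log lam) l atTop :=
        tendsto_atTop_add_const_right _ (-(Real.log lam)) (ht.const_mul_atTop hη)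
      apply h1.congr'
      filter_upwards [self_mem_nhdsWithin] with ε (hε : ε ∈ Set.Ioi 0)
      rw [hBlog ε hε]
    filter_upwards [self_mem_nhdsWithin, ht.eventually_gt_atTop 1, htg.eventually_gt_atTop 1,
      hg0.eventually (gt_mem_nhds hd)] with ε hε h1 h2 h3
    have hε' : (0:ℝ) < ε := hε
    have hN2 : 2 ≤ coverNum X' (g ε) := two_le_coverNum X' hab (hgpos ε hε') h3
    have hNN : coverNum X' (g ε) ≤ coverNum X ε := coverNum_transfer Γ hη hlam hH hε'
    have hA : Real.log (Real.log (coverNum X' (g ε))) ≤ Real.log (Real.log (coverNum X ε)) :=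
      loglog_mono hN2 hNN
    have hB : 0 < Real.log (-Real.log ε) := Real.log_pos h1
    have hB' : 0 < Real.log (-Real.log (g ε)) := Real.log_pos h2
    have heq : Real.log (Real.log (coverNum X ε)) / Real.log (-Real.log ε) *
        (Real.log (-Real.log ε) / Real.log (-Real.log (g ε)))
        = Real.log (Real.log (coverNum X ε)) / Real.log (-Real.log (g ε)) := by
      rw [div_mul_div_comm, mul_comm (Real.log (Real.log (coverNum X ε))) _,
        mul_div_mul_left _ _ hB.ne']
    rw [heq]
    exact div_le_div_of_nonneg_right hA hB'.le


/-- If `Γ : X ≃ₜ X'` is a biHölder homeomorphism of compact metric spaces and both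
double-logarithmic dimensions exist, then they are equal. -/
theorem dim_eq_of_biholder {X X' : Type*} [MetricSpace X] [MetricSpace X']
    [CompactSpace X] [CompactSpace X']
    (Γ : X ≃ₜ X')
    (η lam : ℝ) (hη : 0 < η) (hlam : 0 < lam)
    (hH : ∀ x₁ x₂ : X, dist (Γ x₁) (Γ x₂) ≤ lam * dist x₁ x₂ ^ η)
    (η' lam' : ℝ) (hη' : 0 < η') (hlam' : 0 < lam')
    (hH' : ∀ y₁ y₂ : X', dist (Γ.symm y₁) (Γ.symm y₂) ≤ lam' * dist y₁ y₂ ^ η')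
    (D D' : ℝ)
    (hD : Filter.Tendsto
      (fun ε : ℝ => Real.log (Real.log (coverNum X ε)) / Real.log (-Real.log ε))
      (nhdsWithin 0 (Set.Ioi 0)) (nhds D))
    (hD' : Filter.Tendsto
      (fun ε : ℝ => Real.log (Real.log (coverNum X' ε)) / Real.log (-Real.log ε))
      (nhdsWithin 0 (Set.Ioi 0)) (nhds D')) :
    D = D' :=
  le_antisymm
    (dim_le_of_holder Γ.symm η' lam' hη' hlam' hH' D' D hD' hD)
    (dim_le_of_holder Γ η lam hη hlam hH D D' hD hD')
end

section
/- Let (V,→) be a digraph with finite balls and a finite estuary U (a finite set such that every v ∈ V is upstream of some u ∈ U), and suppose (V,→) is dimensionally homogeneous with dimension D = dim(V,→). Let λ > 1, let (c_u)_{u∈U} be positive coefficients, and let d(a,b) = Σ_{u∈U} c_u λ^{−R_u(a,b)} where R_u(a,b) = sup{r : a,b agree on B(u,r)}. Let X ⊆ A^V be a pattern space with lower entropy h̲_u(X) := liminf_r log₂|X_{B(u,r)}|/|B(u,r)| > 0 for some u ∈ U. Then the double-logarithmic metric dimension of (X,d) exists and equals D. -/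
open Filter Topology

/-- The set of restrictions to `S` of elements of `X ⊆ A^V`. -/
def restrictSet {V A : Type*} (X : Set (V → A)) (S : Set V) : Set (S → A) :=
  (fun x : V → A => fun u : S => x u.1) '' X

/-- The pseudometric `d_{v,λ}(a,b) = λ^{-R_v(a,b)}`, `R_v(a,b)` the largest radius of
agreement around `v`. -/
noncomputable def dvl {V A : Type*} (E : V → V → Prop) (v : V) (lam : ℝ)
    (a b : V → A) : ℝ :=
  sInf ({lam} ∪ (fun r : ℕ => lam⁻¹ ^ r) '' {r : ℕ | ∀ u ∈ gBall E v r, a u = b u})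

/-- The metric `d(a,b) = ∑_{u ∈ U} c_u·λ^{-R_u(a,b)}` based at the estuary `U`. -/
noncomputable def dEst {V A : Type*} (E : V → V → Prop) (U : Finset V) (c : V → ℝ)
    (lam : ℝ) (a b : V → A) : ℝ :=
  ∑ u ∈ U, c u * dvl E u lam a b

/-- The diameter of a set of configurations with respect to `dEst`. -/
noncomputable def diamD {V A : Type*} (E : V → V → Prop) (U : Finset V) (c : V → ℝ)
    (lam : ℝ) (S : Set (V → A)) : ℝ :=
  sSup {x : ℝ | ∃ a ∈ S, ∃ b ∈ S, x = dEst E U c lam a b}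

/-- The minimal cardinality of a cover of `X` by open sets of `dEst`-diameter `≤ ε`. -/
noncomputable def coverNumD {V A : Type*} [TopologicalSpace A] (E : V → V → Prop)
    (U : Finset V) (c : V → ℝ) (lam : ℝ) (X : Set (V → A)) (ε : ℝ) : ℕ :=
  sInf {n : ℕ | ∃ C : Finset (Set (V → A)), C.card = n ∧
    (∀ S ∈ C, IsOpen S ∧ diamD E U c lam S ≤ ε) ∧ X ⊆ ⋃₀ (C : Set (Set (V → A)))}

/-! ### Basic facts about `gBall` -/

lemma gBall_subset_succ {V : Type*} (E : V → V → Prop) (v : V) (r : ℕ) :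
    gBall E v r ⊆ gBall E v (r + 1) := by
  intro x hx; exact Or.inl hx

lemma gBall_mono_s19 {V : Type*} (E : V → V → Prop) (v : V) {r s : ℕ} (h : r ≤ s) :
    gBall E v r ⊆ gBall E v s := by
  induction h with
  | refl => exact subset_rfl
  | step h ih => exact ih.trans (gBall_subset_succ E v _)

lemma self_mem_gBall {V : Type*} (E : V → V → Prop) (v : V) (r : ℕ) :
    v ∈ gBall E v r := gBall_mono_s19 E v (Nat.zero_le r) rfl

/-! ### Basic facts about `dvl`, `dEst`, `diamD` -/

section
variable {V A : Type*} {E : V → V → Prop} {v : V} {lam : ℝ} {a b : V → A}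

lemma dvl_set_nonneg (hlam : 1 < lam) :
    ∀ x ∈ ({lam} ∪ (fun r : ℕ => lam⁻¹ ^ r) '' {r : ℕ | ∀ u ∈ gBall E v r, a u = b u} :
      Set ℝ), 0 ≤ x := by
  rintro x (rfl | ⟨r, _, rfl⟩)
  · linarith
  · positivity

lemma dvl_nonneg (hlam : 1 < lam) : 0 ≤ dvl E v lam a b :=
  Real.sInf_nonneg (dvl_set_nonneg hlam)

lemma dvl_bddBelow (hlam : 1 < lam) :
    BddBelow ({lam} ∪ (fun r : ℕ => lam⁻¹ ^ r) ''
      {r : ℕ | ∀ u ∈ gBall E v r, a u = b u} : Set ℝ) :=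
  ⟨0, fun x hx => dvl_set_nonneg hlam x hx⟩

lemma dvl_le_lam (hlam : 1 < lam) : dvl E v lam a b ≤ lam :=
  csInf_le (dvl_bddBelow hlam) (Or.inl rfl)

lemma dvl_le_of_agree (hlam : 1 < lam) {r : ℕ} (h : ∀ u ∈ gBall E v r, a u = b u) :
    dvl E v lam a b ≤ lam⁻¹ ^ r :=
  csInf_le (dvl_bddBelow hlam) (Or.inr ⟨r, h, rfl⟩)

lemma le_dvl_of_not_agree (hlam : 1 < lam) {k : ℕ}
    (h : ¬ ∀ u ∈ gBall E v k, a u = b u) :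
    lam⁻¹ ^ k ≤ dvl E v lam a b := by
  have h0 : (0:ℝ) ≤ lam⁻¹ := by positivity
  have h1 : lam⁻¹ ≤ 1 := by
    rw [inv_le_one_iff₀]; right; linarith
  apply le_csInf ⟨lam, Or.inl rfl⟩
  rintro x (hx | ⟨r, hr, rfl⟩)
  · rw [Set.mem_singleton_iff] at hx
    rw [hx]
    calc lam⁻¹ ^ k ≤ 1 := pow_le_one₀ h0 h1
      _ ≤ lam := by linarith
  · have hrk : r < k := by
      by_contra hge
      exact h fun u hu => hr u (gBall_mono_s19 E v (not_lt.1 hge) hu)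
    exact pow_le_pow_of_le_one h0 h1 hrk.le

end

section
variable {V A : Type*} {E : V → V → Prop} {U : Finset V} {c : V → ℝ} {lam : ℝ}
  {a b : V → A}

lemma dEst_le_sum (hlam : 1 < lam) (hc : ∀ u ∈ U, 0 < c u) :
    dEst E U c lam a b ≤ (∑ u ∈ U, c u) * lam := by
  rw [Finset.sum_mul]
  exact Finset.sum_le_sum fun u hu =>
    mul_le_mul_of_nonneg_left (dvl_le_lam hlam) (hc u hu).le

lemma dEst_le_of_agree (hlam : 1 < lam) (hc : ∀ u ∈ U, 0 < c u) {R : ℕ}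
    (h : ∀ u ∈ U, ∀ w ∈ gBall E u R, a w = b w) :
    dEst E U c lam a b ≤ (∑ u ∈ U, c u) * lam⁻¹ ^ R := by
  rw [Finset.sum_mul]
  exact Finset.sum_le_sum fun u hu =>
    mul_le_mul_of_nonneg_left (dvl_le_of_agree hlam (h u hu)) (hc u hu).le

lemma term_le_dEst (hlam : 1 < lam) (hc : ∀ u ∈ U, 0 < c u) {u : V} (hu : u ∈ U) :
    c u * dvl E u lam a b ≤ dEst E U c lam a b :=
  Finset.single_le_sum (f := fun v => c v * dvl E v lam a b)
    (fun v hv => mul_nonneg (hc v hv).le (dvl_nonneg hlam)) hu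

lemma dEst_le_diamD (hlam : 1 < lam) (hc : ∀ u ∈ U, 0 < c u) {S : Set (V → A)}
    (ha : a ∈ S) (hb : b ∈ S) : dEst E U c lam a b ≤ diamD E U c lam S := by
  refine le_csSup ⟨(∑ u ∈ U, c u) * lam, ?_⟩ ⟨a, ha, b, hb, rfl⟩
  rintro x ⟨p, _, q, _, rfl⟩; exact dEst_le_sum hlam hc

lemma diamD_le {S : Set (V → A)} {ε : ℝ} (hε : 0 ≤ ε)
    (h : ∀ a ∈ S, ∀ b ∈ S, dEst E U c lam a b ≤ ε) : diamD E U c lam S ≤ ε :=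
  Real.sSup_le (by rintro x ⟨p, hp, q, hq, rfl⟩; exact h p hp q hq) hε

end

/-! ### Counting patterns -/

section counting
variable {V A : Type*} [Fintype A] {X : Set (V → A)}

lemma restrictSet_finite {W : Set V} (hW : W.Finite) : (restrictSet X W).Finite := by
  haveI := hW.fintype
  exact Set.toFinite _

lemma restrictSet_ncard_le {W : Set V} (hW : W.Finite) :
    (restrictSet X W).ncard ≤ Fintype.card A ^ W.ncard := by
  classical
  haveI := hW.fintype
  calc (restrictSet X W).ncard ≤ (Set.univ : Set (W → A)).ncard :=
        Set.ncard_le_ncard (Set.subset_univ _) (Set.toFinite _)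
    _ = Nat.card (W → A) := Set.ncard_univ _
    _ = Fintype.card (W → A) := Nat.card_eq_fintype_card
    _ = Fintype.card A ^ Fintype.card W := Fintype.card_fun
    _ = Fintype.card A ^ W.ncard := by rw [Set.ncard_eq_toFinset_card', Set.toFinset_card]

lemma ncard_biUnion_le_sum {E : V → V → Prop} (U : Finset V) (R : ℕ)
    (hfin : ∀ (v : V) (r : ℕ), (gBall E v r).Finite) :
    (⋃ u ∈ U, gBall E u R).ncard ≤ ∑ u ∈ U, (gBall E u R).ncard := by
  classical
  have hset : (⋃ u ∈ U, gBall E u R) = ↑(U.biUnion fun u => (hfin u R).toFinset) := by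
    ext x
    simp [Set.Finite.mem_toFinset]
  rw [hset, Set.ncard_coe_finset]
  refine Finset.card_biUnion_le.trans ?_
  exact Finset.sum_le_sum fun u _ => le_of_eq (Set.ncard_eq_toFinset_card _ _).symm

end counting

/-! ### Bounds on the covering number -/

section cover
variable {V A : Type*} [Fintype A] [TopologicalSpace A] [DiscreteTopology A]
  {E : V → V → Prop} {U : Finset V} {c : V → ℝ} {lam : ℝ} {X : Set (V → A)}

/-- Upper bound: cylinders on `W = ⋃_{u ∈ U} B(u,R)` give a valid cover. -/
lemma cover_witness (hlam : 1 < lam) (hc : ∀ u ∈ U, 0 < c u)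
    (hfin : ∀ (v : V) (r : ℕ), (gBall E v r).Finite) {ε : ℝ} (hε : 0 < ε) (R : ℕ)
    (hR : (∑ u ∈ U, c u) * lam⁻¹ ^ R ≤ ε) :
    ∃ n ∈ {n : ℕ | ∃ C : Finset (Set (V → A)), C.card = n ∧
      (∀ S ∈ C, IsOpen S ∧ diamD E U c lam S ≤ ε) ∧ X ⊆ ⋃₀ (C : Set (Set (V → A)))},
      n ≤ Fintype.card A ^ (⋃ u ∈ U, gBall E u R).ncard := by
  classical
  set W : Set V := ⋃ u ∈ U, gBall E u R with hWdef
  have hW : W.Finite := Set.Finite.biUnion U.finite_toSet fun u _ => hfin u R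
  haveI := hW.fintype
  set P := restrictSet X W with hP
  have hPfin : P.Finite := restrictSet_finite hW
  set cyl : (W → A) → Set (V → A) := fun p => {x | ∀ w : W, x w.1 = p w} with hcyl
  set C : Finset (Set (V → A)) := hPfin.toFinset.image cyl with hC
  refine ⟨C.card, ⟨C, rfl, ?_, ?_⟩, ?_⟩
  · intro S hS
    simp only [hC, Finset.mem_image] at hS
    obtain ⟨p, _, rfl⟩ := hS
    constructor
    · have : cyl p = ⋂ w : W, (fun x : V → A => x w.1) ⁻¹' {p w} := by
        ext x; simp [hcyl]
      rw [this]
      exact isOpen_iInter_of_finite fun w =>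
        (isOpen_discrete _).preimage (continuous_apply _)
    · apply diamD_le hε.le
      intro x hx y hy
      refine le_trans (dEst_le_of_agree hlam hc ?_) hR
      intro u hu w hw
      have hwW : w ∈ W := Set.mem_biUnion hu hw
      calc x w = p ⟨w, hwW⟩ := hx ⟨w, hwW⟩
        _ = y w := (hy ⟨w, hwW⟩).symm
  · intro x hx
    refine ⟨cyl (fun w : W => x w.1), ?_, fun w => rfl⟩
    simp only [hC, Finset.coe_image, Set.mem_image]
    exact ⟨_, hPfin.mem_toFinset.2 ⟨x, hx, rfl⟩, rfl⟩
  · calc C.card ≤ hPfin.toFinset.card := Finset.card_image_le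
      _ = P.ncard := by rw [Set.ncard_eq_toFinset_card]
      _ ≤ Fintype.card A ^ W.ncard := restrictSet_ncard_le hW

/-- Lower bound: any valid cover has at least `|X_{B(u₀,k)}|` elements. -/
lemma le_card_of_cover (hlam : 1 < lam) (hc : ∀ u ∈ U, 0 < c u)
    {u₀ : V} (hu₀ : u₀ ∈ U) {ε : ℝ} {k : ℕ} (hk : ε < c u₀ * lam⁻¹ ^ k)
    {n : ℕ} (hn : n ∈ {n : ℕ | ∃ C : Finset (Set (V → A)), C.card = n ∧
      (∀ S ∈ C, IsOpen S ∧ diamD E U c lam S ≤ ε) ∧ X ⊆ ⋃₀ (C : Set (Set (V → A)))}) :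
    (restrictSet X (gBall E u₀ k)).ncard ≤ n := by
  obtain ⟨C, rfl, hCd, hCcov⟩ := hn
  classical
  have key : ∀ p ∈ restrictSet X (gBall E u₀ k), ∃ S ∈ C, ∃ x ∈ X,
      x ∈ S ∧ (fun w : gBall E u₀ k => x w.1) = p := by
    rintro p ⟨x, hxX, rfl⟩
    obtain ⟨S, hS, hxS⟩ := hCcov hxX
    exact ⟨S, hS, x, hxX, hxS, rfl⟩
  choose! Φ hΦC x hxX hxS hxp using key
  have hagree : ∀ S ∈ C, ∀ a b : V → A, a ∈ S → b ∈ S →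
      ∀ w ∈ gBall E u₀ k, a w = b w := by
    intro S hS a b ha hb
    by_contra hne
    have h1 : dEst E U c lam a b ≤ ε :=
      le_trans (dEst_le_diamD hlam hc ha hb) (hCd S hS).2
    have h2 : c u₀ * lam⁻¹ ^ k ≤ dEst E U c lam a b := by
      calc c u₀ * lam⁻¹ ^ k ≤ c u₀ * dvl E u₀ lam a b :=
            mul_le_mul_of_nonneg_left (le_dvl_of_not_agree hlam hne) (hc u₀ hu₀).le
        _ ≤ dEst E U c lam a b := term_le_dEst hlam hc hu₀
    linarith
  have hinj : Set.InjOn Φ (restrictSet X (gBall E u₀ k)) := by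
    intro p hp q hq hpq
    have hxq : x q hq ∈ Φ p := hpq ▸ hxS q hq
    have := hagree (Φ p) (hΦC p hp) (x p hp) (x q hq) (hxS p hp) hxq
    rw [← hxp p hp, ← hxp q hq]
    funext w
    exact this w.1 w.2
  calc (restrictSet X (gBall E u₀ k)).ncard
      ≤ (C : Set (Set (V → A))).ncard :=
        Set.ncard_le_ncard_of_injOn Φ (fun p hp => hΦC p hp) hinj C.finite_toSet
    _ = C.card := Set.ncard_coe_finset C

end cover

/-! ### Main theorem -/

set_option maxHeartbeats 1000000

/-- On a dimensionally homogeneous digraph of dimension `D` with a finite estuary `U`,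
the metric `dEst` based at `U` is dimensionally compatible: for any pattern space `X`
with positive lower entropy at some `u ∈ U`, the double-logarithmic metric dimension of
`(X, d)` exists and equals `D`. -/
theorem metric_dimension_eq_network_dimension {V A : Type*} [Countable V] [Fintype A]
    [TopologicalSpace A] [DiscreteTopology A]
    (E : V → V → Prop) (hfin : ∀ (v : V) (r : ℕ), (gBall E v r).Finite)
    (U : Finset V) (hU : ∀ v : V, ∃ u ∈ U, Relation.ReflTransGen E v u)
    (D : ℝ)
    (hdim : ∀ v : V, Filter.Tendsto
      (fun r : ℕ => Real.log ((gBall E v r).ncard) / Real.log r)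
      Filter.atTop (nhds D))
    (lam : ℝ) (hlam : 1 < lam) (c : V → ℝ) (hc : ∀ u ∈ U, 0 < c u)
    (X : Set (V → A)) (hX : Perfect X)
    (hent : ∃ u ∈ U, 0 < Filter.liminf
      (fun r : ℕ => Real.logb 2 ((restrictSet X (gBall E u r)).ncard) /
        ((gBall E u r).ncard : ℝ)) Filter.atTop) :
    Filter.Tendsto
      (fun ε : ℝ =>
        Real.log (Real.log (coverNumD E U c lam X ε)) / Real.log (-Real.log ε))
      (nhdsWithin 0 (Set.Ioi 0)) (nhds D) := by
  classical
  obtain ⟨u₀, hu₀U, hpos⟩ := hent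
  have hlam0 : (0:ℝ) < lam := by linarith
  have hloglam : 0 < Real.log lam := Real.log_pos hlam
  have hc₀ : 0 < c u₀ := hc u₀ hu₀U
  have hS : 0 < ∑ u ∈ U, c u := Finset.sum_pos hc ⟨u₀, hu₀U⟩
  set S := ∑ u ∈ U, c u with hSdef
  have hball1 : ∀ (v : V) (r : ℕ), 1 ≤ (gBall E v r).ncard := fun v r =>
    (Set.ncard_pos (hfin v r)).2 ⟨v, self_mem_gBall E v r⟩
  have hballR : ∀ (v : V) (r : ℕ), (1:ℝ) ≤ ((gBall E v r).ncard : ℝ) := fun v r => by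
    exact_mod_cast hball1 v r
  set f : ℕ → ℝ := fun r => Real.logb 2 ((restrictSet X (gBall E u₀ r)).ncard) /
    ((gBall E u₀ r).ncard : ℝ) with hfdef
  -- X is nonempty
  have hXne : X.Nonempty := by
    by_contra hemp
    rw [Set.not_nonempty_iff_eq_empty] at hemp
    have hf0 : f = fun _ => 0 := by
      funext r
      simp [hfdef, restrictSet, hemp]
    rw [hf0, Filter.liminf_const] at hpos
    exact lt_irrefl 0 hpos
  have hXr1 : ∀ r : ℕ, 1 ≤ (restrictSet X (gBall E u₀ r)).ncard := fun r =>
    (Set.ncard_pos (restrictSet_finite (hfin u₀ r))).2 (hXne.image _)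
  -- the alphabet has at least two elements
  have hA2 : 2 ≤ Fintype.card A := by
    by_contra hlt
    push_neg at hlt
    have hone : ∀ r : ℕ, (restrictSet X (gBall E u₀ r)).ncard = 1 := by
      intro r
      have hle := restrictSet_ncard_le (X := X) (hfin u₀ r)
      have h1 : Fintype.card A ^ (gBall E u₀ r).ncard ≤ 1 := by
        calc Fintype.card A ^ (gBall E u₀ r).ncard ≤ 1 ^ (gBall E u₀ r).ncard :=
              Nat.pow_le_pow_left (by omega) _
          _ = 1 := one_pow _
      have := hXr1 r
      omega
    have hf0 : f = fun _ => 0 := by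
      funext r
      simp [hfdef, hone r]
    rw [hf0, Filter.liminf_const] at hpos
    exact lt_irrefl 0 hpos
  have hA2R : (2:ℝ) ≤ (Fintype.card A : ℝ) := by exact_mod_cast hA2
  have hlogA : 0 < Real.log (Fintype.card A) := Real.log_pos (by linarith)
  -- entropy: eventual lower bound
  have hfub : ∀ r : ℕ, f r ≤ Real.logb 2 (Fintype.card A) := by
    intro r
    have hbpos : (0:ℝ) < ((gBall E u₀ r).ncard : ℝ) := lt_of_lt_of_le one_pos (hballR u₀ r)
    have hx1 : (1:ℝ) ≤ ((restrictSet X (gBall E u₀ r)).ncard : ℝ) := by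
      exact_mod_cast hXr1 r
    rw [hfdef, div_le_iff₀ hbpos]
    calc Real.logb 2 ((restrictSet X (gBall E u₀ r)).ncard : ℝ)
        ≤ Real.logb 2 (((Fintype.card A ^ (gBall E u₀ r).ncard : ℕ) : ℝ)) := by
          apply (Real.logb_le_logb one_lt_two (by linarith) (by positivity)).2
          exact_mod_cast restrictSet_ncard_le (hfin u₀ r)
      _ = ((gBall E u₀ r).ncard : ℝ) * Real.logb 2 (Fintype.card A) := by
          push_cast
          rw [Real.logb_pow]
      _ = Real.logb 2 (Fintype.card A) * ((gBall E u₀ r).ncard : ℝ) := mul_comm _ _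
  have hfnn : ∀ r : ℕ, 0 ≤ f r := by
    intro r
    have hbpos : (0:ℝ) < ((gBall E u₀ r).ncard : ℝ) := lt_of_lt_of_le one_pos (hballR u₀ r)
    have hx1 : (1:ℝ) ≤ ((restrictSet X (gBall E u₀ r)).ncard : ℝ) := by
      exact_mod_cast hXr1 r
    exact div_nonneg (Real.logb_nonneg one_lt_two hx1) hbpos.le
  have hbddge : IsBoundedUnder (· ≥ ·) atTop f :=
    Filter.isBoundedUnder_of ⟨0, fun r => hfnn r⟩
  have hentev : ∀ᶠ r in atTop, Filter.liminf f atTop / 2 < f r :=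
    eventually_lt_of_lt_liminf (by linarith) hbddge
  obtain ⟨r₁, hr₁⟩ := eventually_atTop.1 hentev
  set η := (Filter.liminf f atTop / 2) * Real.log 2 with hηdef
  have hη : 0 < η := mul_pos (by linarith) (Real.log_pos one_lt_two)
  have hXcnt : ∀ r : ℕ, r₁ ≤ r →
      η * ((gBall E u₀ r).ncard : ℝ) ≤
        Real.log ((restrictSet X (gBall E u₀ r)).ncard : ℝ) := by
    intro r hr
    have hfr := hr₁ r hr
    have hbpos : (0:ℝ) < ((gBall E u₀ r).ncard : ℝ) := lt_of_lt_of_le one_pos (hballR u₀ r)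
    rw [hfdef] at hfr
    simp only at hfr
    rw [lt_div_iff₀ hbpos] at hfr
    have hlogeq : Real.logb 2 ((restrictSet X (gBall E u₀ r)).ncard : ℝ) * Real.log 2 =
        Real.log ((restrictSet X (gBall E u₀ r)).ncard : ℝ) := by
      rw [Real.logb]
      field_simp
    have hl2 : (0:ℝ) ≤ Real.log 2 := (Real.log_pos one_lt_two).le
    calc η * ((gBall E u₀ r).ncard : ℝ)
        = (Filter.liminf f atTop / 2 * ((gBall E u₀ r).ncard : ℝ)) * Real.log 2 := by
          rw [hηdef]; ring
      _ ≤ Real.logb 2 ((restrictSet X (gBall E u₀ r)).ncard : ℝ) * Real.log 2 :=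
          mul_le_mul_of_nonneg_right hfr.le hl2
      _ = _ := hlogeq
  -- nonnegativity of the dimension
  have hD0 : 0 ≤ D := by
    refine ge_of_tendsto (hdim u₀) ?_
    filter_upwards [eventually_ge_atTop 2] with r hr
    have h1 : (0:ℝ) ≤ Real.log ((gBall E u₀ r).ncard : ℝ) := Real.log_nonneg (hballR u₀ r)
    have h2 : (0:ℝ) < Real.log r := Real.log_pos (by exact_mod_cast hr)
    exact div_nonneg h1 h2.le
  -- -log ε → ∞ as ε → 0⁺
  have hLtop : Tendsto (fun ε : ℝ => -Real.log ε) (𝓝[>] (0:ℝ)) atTop :=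
    tendsto_neg_atBot_atTop.comp Real.tendsto_log_nhdsGT_zero
  have hlogLtop : Tendsto (fun ε : ℝ => Real.log (-Real.log ε)) (𝓝[>] (0:ℝ)) atTop :=
    Real.tendsto_log_atTop.comp hLtop
  -- the key two-sided estimate
  have key : ∀ δ : ℝ, 0 < δ → ∀ᶠ ε in 𝓝[>] (0:ℝ),
      D - δ ≤ Real.log (Real.log (coverNumD E U c lam X ε)) / Real.log (-Real.log ε) ∧
      Real.log (Real.log (coverNumD E U c lam X ε)) / Real.log (-Real.log ε) ≤ D + δ := by
    intro δ hδ
    have hδ2 : 0 < δ/2 := by linarith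
    -- dimension control, uniform over U
    have hdimev : ∀ᶠ r : ℕ in atTop, ∀ u ∈ U,
        |Real.log ((gBall E u r).ncard : ℝ) / Real.log r - D| < δ/2 := by
      rw [Filter.eventually_all_finset]
      intro u _
      exact (hdim u).eventually (eventually_abs_sub_lt D hδ2)
    obtain ⟨r₂, hr₂⟩ := eventually_atTop.1 hdimev
    have hdimub : ∀ r : ℕ, r₂ ≤ r → 2 ≤ r → ∀ u ∈ U,
        Real.log ((gBall E u r).ncard : ℝ) ≤ (D + δ/2) * Real.log r := by
      intro r hra hrb u hu
      have hlr : (0:ℝ) < Real.log r := Real.log_pos (by exact_mod_cast hrb)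
      have h4 := (abs_lt.1 (hr₂ r hra u hu)).2
      have h5 : Real.log ((gBall E u r).ncard : ℝ) / Real.log r < D + δ/2 := by linarith
      linarith [(div_lt_iff₀ hlr).1 h5]
    have hdimlb : ∀ r : ℕ, r₂ ≤ r → 2 ≤ r →
        (D - δ/2) * Real.log r ≤ Real.log ((gBall E u₀ r).ncard : ℝ) := by
      intro r hra hrb
      have hlr : (0:ℝ) < Real.log r := Real.log_pos (by exact_mod_cast hrb)
      have h4 := (abs_lt.1 (hr₂ r hra u₀ hu₀U)).1
      have h5 : D - δ/2 < Real.log ((gBall E u₀ r).ncard : ℝ) / Real.log r := by linarith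
      linarith [(lt_div_iff₀ hlr).1 h5]
    -- constants
    set K₁ : ℝ := Real.log (2/Real.log lam + 1) with hK₁def
    have hK₁0 : 0 ≤ K₁ := Real.log_nonneg (le_add_of_nonneg_left (by positivity))
    set K₂ : ℝ := Real.log ((U.card : ℝ) * Real.log (Fintype.card A : ℝ)) +
      (D + δ/2) * K₁ with hK₂def
    set Km : ℝ := |Real.log (2*Real.log lam)| + |Real.log (2/Real.log lam)| with hKmdef
    have hKm0 : 0 ≤ Km := by positivity
    set K₅ : ℝ := |Real.log η| + |D - δ/2| * Km with hK₅def
    have hK₅0 : 0 ≤ K₅ := by positivity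
    set m : ℕ := max (max r₁ r₂) 2 with hmdef
    set a₀ : ℝ := |Real.log (c u₀ / 2)| with ha₀def
    clear_value K₂ K₅
    filter_upwards [self_mem_nhdsWithin,
      hLtop.eventually_ge_atTop 1,
      hLtop.eventually_ge_atTop (|Real.log S|),
      hLtop.eventually_ge_atTop (((max r₂ 2 : ℕ) : ℝ) * Real.log lam + |Real.log S|),
      hLtop.eventually_ge_atTop ((m : ℝ) * Real.log lam + Real.log lam + a₀),
      hLtop.eventually_ge_atTop a₀,
      hLtop.eventually_ge_atTop (2*a₀ + 2*Real.log lam),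
      hlogLtop.eventually_ge_atTop (2*(|K₂|+1)/δ),
      hlogLtop.eventually_ge_atTop (2*(K₅+1)/δ),
      hlogLtop.eventually_ge_atTop 1]
      with ε hεI hL1 hLS hLR hLk hLa hLk2 hK2L hK5L hlogL1
    have hε0 : (0:ℝ) < ε := Set.mem_Ioi.1 hεI
    set L : ℝ := -Real.log ε with hLdef
    have hLpos : (0:ℝ) < L := by linarith
    have hlogL : (0:ℝ) < Real.log L := by linarith
    clear_value L
    set N : ℕ := coverNumD E U c lam X ε with hNdef
    set R : ℕ := ⌈Real.logb lam (S/ε)⌉₊ with hRdef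
    set k : ℕ := ⌊Real.logb lam (c u₀/(2*ε))⌋₊ with hkdef
    clear_value N R k
    -- logb formulas
    have hlbR : Real.logb lam (S/ε) = (Real.log S + L)/Real.log lam := by
      rw [Real.logb, Real.log_div hS.ne' hε0.ne', hLdef]
      ring
    have hlbk : Real.logb lam (c u₀/(2*ε)) = (Real.log (c u₀/2) + L)/Real.log lam := by
      rw [show c u₀/(2*ε) = (c u₀/2)/ε by ring, Real.logb,
        Real.log_div (by positivity) hε0.ne', hLdef]
      ring
    -- bounds on R
    have hlbRnn : 0 ≤ Real.logb lam (S/ε) := by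
      rw [hlbR]
      apply div_nonneg _ hloglam.le
      linarith [neg_abs_le (Real.log S)]
    have hRge : Real.logb lam (S/ε) ≤ (R:ℝ) := by rw [hRdef]; exact Nat.le_ceil _
    have hRub : (R:ℝ) ≤ (2/Real.log lam + 1) * L := by
      have h1 : (R:ℝ) < Real.logb lam (S/ε) + 1 := by
        rw [hRdef]; exact Nat.ceil_lt_add_one hlbRnn
      have h2 : Real.logb lam (S/ε) ≤ 2*L/Real.log lam := by
        rw [hlbR, div_le_div_iff_of_pos_right hloglam]
        linarith [le_abs_self (Real.log S)]
      have h3 : 2*L/Real.log lam + 1 ≤ (2/Real.log lam + 1) * L := by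
        have e : (2/Real.log lam + 1) * L = 2*L/Real.log lam + L := by ring
        rw [e]
        linarith
      linarith
    have hRgeM : (max r₂ 2 : ℕ) ≤ R := by
      have h1 : ((max r₂ 2 : ℕ) : ℝ) ≤ Real.logb lam (S/ε) := by
        rw [hlbR, le_div_iff₀ hloglam]
        linarith [neg_abs_le (Real.log S)]
      exact_mod_cast h1.trans hRge
    have hR2 : 2 ≤ R := le_trans (le_max_right _ _) hRgeM
    have hRr₂ : r₂ ≤ R := le_trans (le_max_left _ _) hRgeM
    -- the covering estimate applies
    have hcov : S * lam⁻¹ ^ R ≤ ε := by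
      have hp : S/ε ≤ lam ^ R := by
        rw [← Real.rpow_natCast lam R]
        calc S/ε = lam ^ Real.logb lam (S/ε) :=
              (Real.rpow_logb hlam0 (ne_of_gt hlam) (div_pos hS hε0)).symm
          _ ≤ lam ^ ((R:ℕ):ℝ) := (Real.rpow_le_rpow_left_iff hlam).2 hRge
      have hlamR : (0:ℝ) < lam ^ R := by positivity
      have e : S * lam⁻¹ ^ R = S / lam ^ R := by
        rw [inv_pow]; ring
      rw [e, div_le_iff₀ hlamR]
      calc S = ε * (S/ε) := by field_simp
        _ ≤ ε * lam ^ R := mul_le_mul_of_nonneg_left hp hε0.le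
    obtain ⟨n, hnmem, hnle⟩ := cover_witness (X := X) hlam hc hfin hε0 R hcov
    have hNmem : N ∈ {n : ℕ | ∃ C : Finset (Set (V → A)), C.card = n ∧
        (∀ S' ∈ C, IsOpen S' ∧ diamD E U c lam S' ≤ ε) ∧
        X ⊆ ⋃₀ (C : Set (Set (V → A)))} := by
      rw [hNdef, coverNumD]
      exact Nat.sInf_mem ⟨n, hnmem⟩
    have hNleP : N ≤ Fintype.card A ^ (⋃ u ∈ U, gBall E u R).ncard := by
      refine le_trans ?_ hnle
      rw [hNdef, coverNumD]
      exact Nat.sInf_le hnmem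
    -- bounds on k
    have hlbknn : 0 ≤ Real.logb lam (c u₀/(2*ε)) := by
      rw [hlbk]
      apply div_nonneg _ hloglam.le
      linarith [neg_abs_le (Real.log (c u₀/2))]
    have hkub : (k:ℝ) ≤ (Real.log (c u₀/2) + L)/Real.log lam := by
      rw [← hlbk, hkdef]
      exact Nat.floor_le hlbknn
    have hkgeM : m ≤ k := by
      rw [hkdef]
      apply Nat.le_floor
      rw [hlbk, le_div_iff₀ hloglam]
      linarith [neg_abs_le (Real.log (c u₀/2))]
    have hk2 : 2 ≤ k := le_trans (le_max_right _ _) hkgeM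
    have hkr₁ : r₁ ≤ k := le_trans (le_trans (le_max_left _ _) (le_max_left _ _)) hkgeM
    have hkr₂ : r₂ ≤ k := le_trans (le_trans (le_max_right _ _) (le_max_left _ _)) hkgeM
    have hεlt : ε < c u₀ * lam⁻¹ ^ k := by
      have hp : lam ^ k ≤ c u₀/(2*ε) := by
        rw [← Real.rpow_natCast lam k]
        calc lam ^ ((k:ℕ):ℝ) ≤ lam ^ Real.logb lam (c u₀/(2*ε)) := by
              apply (Real.rpow_le_rpow_left_iff hlam).2
              rw [hkdef]
              exact Nat.floor_le hlbknn
          _ = c u₀/(2*ε) := Real.rpow_logb hlam0 (ne_of_gt hlam) (by positivity)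
      have hlamk : (0:ℝ) < lam ^ k := by positivity
      have e : c u₀ * lam⁻¹ ^ k = c u₀ / lam ^ k := by rw [inv_pow]; ring
      rw [e, lt_div_iff₀ hlamk]
      calc ε * lam ^ k ≤ ε * (c u₀/(2*ε)) := mul_le_mul_of_nonneg_left hp hε0.le
        _ = c u₀ / 2 := by
            field_simp
        _ < c u₀ := by linarith
    have hXkN : (restrictSet X (gBall E u₀ k)).ncard ≤ N :=
      le_card_of_cover hlam hc hu₀U hεlt hNmem
    -- numerator lower bound
    have hBk1 : (1:ℝ) ≤ ((gBall E u₀ k).ncard : ℝ) := hballR u₀ k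
    have hBkpos : (0:ℝ) < ((gBall E u₀ k).ncard : ℝ) := lt_of_lt_of_le one_pos hBk1
    have hNpos : (0:ℝ) < (N:ℝ) := by
      have h1 : 0 < N := lt_of_lt_of_le one_pos (le_trans (hXr1 k) hXkN)
      exact_mod_cast h1
    have hlogN_lb : η * ((gBall E u₀ k).ncard : ℝ) ≤ Real.log N := by
      calc η * ((gBall E u₀ k).ncard : ℝ)
          ≤ Real.log ((restrictSet X (gBall E u₀ k)).ncard : ℝ) := hXcnt k hkr₁
        _ ≤ Real.log N := by
            apply Real.log_le_log
            · have := hXr1 k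
              exact_mod_cast lt_of_lt_of_le one_pos this
            · exact_mod_cast hXkN
    have hlogNpos : 0 < Real.log N :=
      lt_of_lt_of_le (mul_pos hη hBkpos) hlogN_lb
    -- numerator upper bound
    have hlogN_ub : Real.log N ≤ (((⋃ u ∈ U, gBall E u R).ncard : ℕ) : ℝ) *
        Real.log (Fintype.card A : ℝ) := by
      calc Real.log N ≤ Real.log ((Fintype.card A : ℝ) ^ (⋃ u ∈ U, gBall E u R).ncard) := by
            apply Real.log_le_log hNpos
            exact_mod_cast hNleP
        _ = _ := by rw [Real.log_pow]
    have hWnle : ((((⋃ u ∈ U, gBall E u R).ncard : ℕ)) : ℝ) ≤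
        (U.card : ℝ) * Real.exp ((D + δ/2) * Real.log R) := by
      have h1 : (⋃ u ∈ U, gBall E u R).ncard ≤ ∑ u ∈ U, (gBall E u R).ncard :=
        ncard_biUnion_le_sum U R hfin
      have h2 : ((∑ u ∈ U, (gBall E u R).ncard : ℕ) : ℝ) ≤
          ∑ u ∈ U, Real.exp ((D + δ/2) * Real.log R) := by
        push_cast
        apply Finset.sum_le_sum
        intro u hu
        have hb : (0:ℝ) < ((gBall E u R).ncard : ℝ) := lt_of_lt_of_le one_pos (hballR u R)
        calc ((gBall E u R).ncard : ℝ) = Real.exp (Real.log ((gBall E u R).ncard : ℝ)) :=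
              (Real.exp_log hb).symm
          _ ≤ Real.exp ((D + δ/2) * Real.log R) :=
              Real.exp_le_exp.2 (hdimub R hRr₂ hR2 u hu)
      calc (((⋃ u ∈ U, gBall E u R).ncard : ℕ) : ℝ)
          ≤ ((∑ u ∈ U, (gBall E u R).ncard : ℕ) : ℝ) := by exact_mod_cast h1
        _ ≤ ∑ u ∈ U, Real.exp ((D + δ/2) * Real.log R) := h2
        _ = (U.card : ℝ) * Real.exp ((D + δ/2) * Real.log R) := by
            rw [Finset.sum_const, nsmul_eq_mul]
    have hUpos : (0:ℝ) < (U.card : ℝ) := by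
      have : 0 < U.card := Finset.card_pos.2 ⟨u₀, hu₀U⟩
      exact_mod_cast this
    have hlogR_ub : Real.log R ≤ K₁ + Real.log L := by
      have hRpos : (0:ℝ) < (R:ℝ) := by
        have : 0 < R := lt_of_lt_of_le two_pos hR2
        exact_mod_cast this
      calc Real.log R ≤ Real.log ((2/Real.log lam + 1) * L) := Real.log_le_log hRpos hRub
        _ = K₁ + Real.log L := by
            rw [Real.log_mul (by positivity) hLpos.ne']
    have numer_ub : Real.log (Real.log N) ≤ K₂ + (D + δ/2) * Real.log L := by
      have e1 : Real.log (Real.log N) ≤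
          Real.log ((U.card : ℝ) * Real.exp ((D + δ/2) * Real.log R) *
            Real.log (Fintype.card A : ℝ)) := by
        apply Real.log_le_log hlogNpos
        calc Real.log N ≤ (((⋃ u ∈ U, gBall E u R).ncard : ℕ) : ℝ) *
              Real.log (Fintype.card A : ℝ) := hlogN_ub
          _ ≤ (U.card : ℝ) * Real.exp ((D + δ/2) * Real.log R) *
              Real.log (Fintype.card A : ℝ) :=
              mul_le_mul_of_nonneg_right hWnle hlogA.le
      rw [Real.log_mul (by positivity) hlogA.ne',
        Real.log_mul hUpos.ne' (Real.exp_pos _).ne', Real.log_exp] at e1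
      have hKUeq : Real.log ((U.card : ℝ) * Real.log (Fintype.card A : ℝ)) =
          Real.log (U.card : ℝ) + Real.log (Real.log (Fintype.card A : ℝ)) :=
        Real.log_mul hUpos.ne' hlogA.ne'
      have h5 : (D + δ/2) * Real.log R ≤ (D + δ/2) * (K₁ + Real.log L) :=
        mul_le_mul_of_nonneg_left hlogR_ub (by linarith)
      rw [hK₂def, hKUeq]
      linarith
    -- lower numerator estimate
    have hklb : L/(2*Real.log lam) ≤ (k:ℝ) := by
      have h1 : Real.logb lam (c u₀/(2*ε)) - 1 < (k:ℝ) := by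
        rw [hkdef]; exact Nat.sub_one_lt_floor _
      rw [hlbk] at h1
      have h2 : (Real.log (c u₀/2) + L)/Real.log lam ≤ (k:ℝ) + 1 := by linarith
      rw [div_le_iff₀ hloglam] at h2
      rw [div_le_iff₀ (by positivity : (0:ℝ) < 2*Real.log lam)]
      linarith [neg_abs_le (Real.log (c u₀/2))]
    have hkub2 : (k:ℝ) ≤ (2/Real.log lam) * L := by
      refine hkub.trans ?_
      rw [div_le_iff₀ hloglam]
      have e : (2/Real.log lam) * L * Real.log lam = 2*L := by field_simp
      rw [e]
      linarith [le_abs_self (Real.log (c u₀/2))]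
    have hkposR : (0:ℝ) < (k:ℝ) := by
      have : 0 < k := lt_of_lt_of_le two_pos hk2
      exact_mod_cast this
    have hlogk_ub : Real.log k ≤ Real.log (2/Real.log lam) + Real.log L := by
      calc Real.log k ≤ Real.log ((2/Real.log lam) * L) := Real.log_le_log hkposR hkub2
        _ = _ := Real.log_mul (by positivity) hLpos.ne'
    have hlogk_lb : Real.log L - Real.log (2*Real.log lam) ≤ Real.log k := by
      have h1 := Real.log_le_log (by positivity : (0:ℝ) < L/(2*Real.log lam)) hklb
      rw [Real.log_div hLpos.ne' (by positivity)] at h1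
      linarith
    have habs : |Real.log k - Real.log L| ≤ Km := by
      rw [abs_le, hKmdef]
      constructor
      · linarith [le_abs_self (Real.log (2*Real.log lam)),
          abs_nonneg (Real.log (2/Real.log lam))]
      · linarith [le_abs_self (Real.log (2/Real.log lam)),
          abs_nonneg (Real.log (2*Real.log lam))]
    have hprod : -(|D - δ/2| * Km) ≤ (D - δ/2) * (Real.log k - Real.log L) := by
      have h1 : |(D - δ/2) * (Real.log k - Real.log L)| ≤ |D - δ/2| * Km := by
        rw [abs_mul]
        exact mul_le_mul_of_nonneg_left habs (abs_nonneg _)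
      linarith [neg_abs_le ((D - δ/2) * (Real.log k - Real.log L))]
    have numer_lb : (D - δ/2) * Real.log L - K₅ ≤ Real.log (Real.log N) := by
      have e2 : Real.log (η * ((gBall E u₀ k).ncard : ℝ)) ≤ Real.log (Real.log N) :=
        Real.log_le_log (by positivity) hlogN_lb
      rw [Real.log_mul hη.ne' hBkpos.ne'] at e2
      have h6 : (D - δ/2) * Real.log k ≤ Real.log ((gBall E u₀ k).ncard : ℝ) :=
        hdimlb k hkr₂ hk2
      have h7 : (D - δ/2) * Real.log L - |D - δ/2| * Km ≤ (D - δ/2) * Real.log k := by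
        linarith [hprod]
      have h8 : -|Real.log η| ≤ Real.log η := neg_abs_le _
      rw [hK₅def]
      linarith
    -- conclusion
    constructor
    · rw [le_div_iff₀ hlogL]
      rw [div_le_iff₀ hδ] at hK5L
      calc (D - δ) * Real.log L = (D - δ/2)*Real.log L - (δ/2)*Real.log L := by ring
        _ ≤ (D - δ/2)*Real.log L - K₅ := by linarith only [hK5L, hδ]
        _ ≤ Real.log (Real.log N) := numer_lb
    · rw [div_le_iff₀ hlogL]
      rw [div_le_iff₀ hδ] at hK2L
      calc Real.log (Real.log N) ≤ K₂ + (D + δ/2) * Real.log L := numer_ub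
        _ ≤ (δ/2)*Real.log L + (D + δ/2)*Real.log L := by linarith only [hK2L, hδ, le_abs_self K₂]
        _ = (D + δ) * Real.log L := by ring
  -- conclude
  rw [tendsto_order]
  constructor
  · intro a ha
    filter_upwards [key ((D - a)/2) (by linarith)] with ε hε
    linarith [hε.1]
  · intro a ha
    filter_upwards [key ((a - D)/2) (by linarith)] with ε hε
    linarith [hε.2]
end
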